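/- arXiv:math/0210485 — 4 statements merged into one kernel-verified Lean document; each statement's English description precedes it below -/
import Mathlib

section
/- Let H₀, H₁, H₂ be complex Hilbert spaces and let T : H₀ → H₁ and S : H₁ → H₂ be closed, densely defined linear operators with Ran T ⊆ Ker S. Assume the compactness property: every sequence (u_k) in Dom S ∩ Dom T* with sup_k ‖u_k‖ < ∞, ‖S u_k‖ → 0 and ‖T* u_k‖ → 0 has a subsequence converging in H₁. Then Ran T is a closed subspace of H₁. -/
open Filter

variable {H₀ H₁ H₂ : Type*}
  [NormedAddCommGroup H₀] [InnerProductSpace ℂ H₀] [CompleteSpace H₀]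
  [NormedAddCommGroup H₁] [InnerProductSpace ℂ H₁] [CompleteSpace H₁]
  [NormedAddCommGroup H₂] [InnerProductSpace ℂ H₂] [CompleteSpace H₂]

/-- The compactness property for the pair `(T, S)`:  every sequence `uₖ` in
`Dom S ∩ Dom T.adjoint` which is bounded in `H₁` and satisfies `‖S uₖ‖ → 0` and
`‖T.adjoint uₖ‖ → 0` admits a norm-convergent subsequence.  Membership in the domain together
with the value of the operator is encoded via graphs: `(u, s) ∈ S.graph` means `u ∈ Dom S` and
`S u = s`. -/
def CompactnessProperty (T : H₀ →ₗ.[ℂ] H₁) (S : H₁ →ₗ.[ℂ] H₂) : Prop :=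
  ∀ (u : ℕ → H₁) (s : ℕ → H₂) (t : ℕ → H₀),
    (∀ k, (u k, s k) ∈ S.graph) → (∀ k, (u k, t k) ∈ T.adjoint.graph) →
    (∃ M : ℝ, ∀ k, ‖u k‖ ≤ M) →
    Tendsto (fun k => ‖s k‖) atTop (nhds 0) →
    Tendsto (fun k => ‖t k‖) atTop (nhds 0) →
    ∃ (φ : ℕ → ℕ) (L : H₁), StrictMono φ ∧ Tendsto (u ∘ φ) atTop (nhds L)

/-- The harmonic space `ℋ = Ker S ∩ Ker T*` as a subspace of `H₁`:
`u ∈ ℋ` iff `(u, 0) ∈ S.graph` (i.e. `u ∈ Dom S` and `S u = 0`) and `(u, 0) ∈ T.adjoint.graph`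
(i.e. `u ∈ Dom T*` and `T* u = 0`). -/
noncomputable def harmonicSpace (T : H₀ →ₗ.[ℂ] H₁) (S : H₁ →ₗ.[ℂ] H₂) : Submodule ℂ H₁ :=
  (S.graph.comap ((LinearMap.id : H₁ →ₗ[ℂ] H₁).prod (0 : H₁ →ₗ[ℂ] H₂))) ⊓
  (T.adjoint.graph.comap ((LinearMap.id : H₁ →ₗ[ℂ] H₁).prod (0 : H₁ →ₗ[ℂ] H₀)))


section Helpers
open scoped InnerProductSpace
set_option linter.unusedSectionVars false
set_option maxHeartbeats 1000000
open LinearPMap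

section AdjointCore
variable {G₀ G₁ : Type*}
  [NormedAddCommGroup G₀] [InnerProductSpace ℂ G₀] [CompleteSpace G₀]
  [NormedAddCommGroup G₁] [InnerProductSpace ℂ G₁] [CompleteSpace G₁]

noncomputable def rotMap (_T : G₀ →ₗ.[ℂ] G₁) : WithLp 2 (G₁ × G₀) →L[ℂ] G₀ × G₁ :=
  ((-(ContinuousLinearMap.snd ℂ G₁ G₀)).prod (ContinuousLinearMap.fst ℂ G₁ G₀)).comp
    (WithLp.prodContinuousLinearEquiv 2 ℂ G₁ G₀).toContinuousLinearMap

lemma rotMap_apply (T : G₀ →ₗ.[ℂ] G₁) (z : WithLp 2 (G₁ × G₀)) :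
    rotMap T z = (-z.snd, z.fst) := rfl

noncomputable def Vsub (T : G₀ →ₗ.[ℂ] G₁) : Submodule ℂ (WithLp 2 (G₁ × G₀)) :=
  T.graph.comap (rotMap T : WithLp 2 (G₁ × G₀) →ₗ[ℂ] G₀ × G₁)

lemma mem_Vsub (T : G₀ →ₗ.[ℂ] G₁) (z : WithLp 2 (G₁ × G₀)) :
    z ∈ Vsub T ↔ (-z.snd, z.fst) ∈ T.graph := Iff.rfl

lemma Vsub_closed (T : G₀ →ₗ.[ℂ] G₁) (hT : T.IsClosed) : IsClosed (Vsub T : Set (WithLp 2 (G₁ × G₀))) := by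
  have : (Vsub T : Set (WithLp 2 (G₁ × G₀))) = (rotMap T) ⁻¹' (T.graph : Set (G₀ × G₁)) := rfl
  rw [this]
  exact hT.preimage (rotMap T).continuous
set_option linter.unusedSectionVars false

lemma mem_Vperp (T : G₀ →ₗ.[ℂ] G₁) (hT : Dense (T.domain : Set G₀)) (z : WithLp 2 (G₁ × G₀)) :
    z ∈ (Vsub T)ᗮ ↔ (z.fst, z.snd) ∈ T.adjoint.graph := by
  rw [Submodule.mem_orthogonal]
  constructor
  · intro hz
    have key : ∀ x : T.domain, ⟪z.snd, (x : G₀)⟫_ℂ = ⟪z.fst, T x⟫_ℂ := by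
      intro x
      have hv : (WithLp.toLp 2 (T x, -(x : G₀)) : WithLp 2 (G₁ × G₀)) ∈ Vsub T := by
        rw [mem_Vsub]
        simpa using T.mem_graph x
      have h0 := hz _ hv
      rw [WithLp.prod_inner_apply] at h0
      have h1 : ⟪T x, z.fst⟫_ℂ = ⟪(x : G₀), z.snd⟫_ℂ := by
        have : ⟪T x, z.fst⟫_ℂ + (-⟪(x : G₀), z.snd⟫_ℂ) = 0 := by
          simpa [inner_neg_left] using h0
        linear_combination this
      calc ⟪z.snd, (x : G₀)⟫_ℂ = starRingEnd ℂ ⟪(x : G₀), z.snd⟫_ℂ := (inner_conj_symm _ _).symm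
        _ = starRingEnd ℂ ⟪T x, z.fst⟫_ℂ := by rw [h1]
        _ = ⟪z.fst, T x⟫_ℂ := inner_conj_symm _ _
    have hu : z.fst ∈ T.adjoint.domain :=
      T.mem_adjoint_domain_of_exists z.fst ⟨z.snd, fun x => key x⟩
    have hval : T.adjoint ⟨z.fst, hu⟩ = z.snd :=
      adjoint_apply_eq hT ⟨z.fst, hu⟩ (fun x => key x)
    exact T.adjoint.mem_graph_iff.mpr ⟨⟨z.fst, hu⟩, rfl, hval⟩
  · intro hz u hu
    rw [mem_Vsub] at hu
    obtain ⟨y, hy1, hy2⟩ := T.mem_graph_iff.mp hu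
    obtain ⟨a, ha1, ha2⟩ := T.adjoint.mem_graph_iff.mp hz
    have hfa := (adjoint_isFormalAdjoint hT) a y
    rw [ha2, ha1, hy1, hy2] at hfa
    -- hfa : ⟪z.snd, -u.snd⟫ = ⟪z.fst, u.fst⟫
    have h1 : ⟪-u.snd, z.snd⟫_ℂ = ⟪u.fst, z.fst⟫_ℂ := by
      calc ⟪-u.snd, z.snd⟫_ℂ = starRingEnd ℂ ⟪z.snd, -u.snd⟫_ℂ := (inner_conj_symm _ _).symm
        _ = starRingEnd ℂ ⟪z.fst, u.fst⟫_ℂ := by rw [hfa]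
        _ = ⟪u.fst, z.fst⟫_ℂ := inner_conj_symm _ _
    rw [WithLp.prod_inner_apply]
    rw [inner_neg_left] at h1
    show ⟪u.fst, z.fst⟫_ℂ + ⟪u.snd, z.snd⟫_ℂ = 0
    linear_combination -h1

lemma adjoint_graph_closed (T : G₀ →ₗ.[ℂ] G₁) (hT : Dense (T.domain : Set G₀)) :
    IsClosed (T.adjoint.graph : Set (G₁ × G₀)) := by
  have : (T.adjoint.graph : Set (G₁ × G₀)) =
      ((WithLp.prodContinuousLinearEquiv 2 ℂ G₁ G₀).symm) ⁻¹' ((Vsub T)ᗮ : Set (WithLp 2 (G₁ × G₀))) := by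
    ext p
    simp only [Set.mem_preimage, SetLike.mem_coe]
    rw [mem_Vperp T hT]
    rfl
  rw [this]
  exact ((Vsub T).isClosed_orthogonal).preimage (WithLp.prodContinuousLinearEquiv 2 ℂ G₁ G₀).symm.continuous

lemma mem_graph_of_forall_adjoint (T : G₀ →ₗ.[ℂ] G₁) (hTc : T.IsClosed)
    (hTd : Dense (T.domain : Set G₀)) {x : G₀} {f : G₁}
    (h : ∀ u w, (u, w) ∈ T.adjoint.graph → ⟪u, f⟫_ℂ = ⟪w, x⟫_ℂ) : (x, f) ∈ T.graph := by
  haveI : CompleteSpace (Vsub T) := (Vsub_closed T hTc).completeSpace_coe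
  have hVV : (Vsub T)ᗮᗮ = Vsub T := Submodule.orthogonal_orthogonal _
  have hz : (WithLp.equiv 2 (G₁ × G₀)).symm (f, -x) ∈ (Vsub T)ᗮᗮ := by
    rw [Submodule.mem_orthogonal]
    intro z hz
    rw [mem_Vperp T hTd] at hz
    have hzc := h z.fst z.snd hz
    rw [WithLp.prod_inner_apply]
    show ⟪z.fst, f⟫_ℂ + ⟪z.snd, -x⟫_ℂ = 0
    rw [inner_neg_right]
    linear_combination hzc
  rw [hVV, mem_Vsub] at hz
  simpa using hz

end AdjointCore

lemma mem_harmonic_iff (T : H₀ →ₗ.[ℂ] H₁) (S : H₁ →ₗ.[ℂ] H₂) (u : H₁) :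
    u ∈ harmonicSpace T S ↔ (u, (0:H₂)) ∈ S.graph ∧ (u, (0:H₀)) ∈ T.adjoint.graph := by
  simp [harmonicSpace, Submodule.mem_inf, Submodule.mem_comap]

/-- The kernel of `S` as a submodule. -/
noncomputable def kerS (S : H₁ →ₗ.[ℂ] H₂) : Submodule ℂ H₁ :=
  S.graph.comap ((LinearMap.id : H₁ →ₗ[ℂ] H₁).prod (0 : H₁ →ₗ[ℂ] H₂))

lemma mem_kerS (S : H₁ →ₗ.[ℂ] H₂) (u : H₁) : u ∈ kerS S ↔ (u, (0:H₂)) ∈ S.graph := by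
  simp [kerS, Submodule.mem_comap]

lemma kerS_closed (S : H₁ →ₗ.[ℂ] H₂) (hSc : S.IsClosed) : IsClosed (kerS S : Set H₁) := by
  have : (kerS S : Set H₁) = (fun u : H₁ => ((u, 0) : H₁ × H₂)) ⁻¹' (S.graph : Set (H₁ × H₂)) := by
    ext u; simp [mem_kerS]
  rw [this]
  exact hSc.preimage (continuous_id.prodMk continuous_const)

lemma harmonic_closed (T : H₀ →ₗ.[ℂ] H₁) (S : H₁ →ₗ.[ℂ] H₂) (hSc : S.IsClosed)
    (hTd : Dense (T.domain : Set H₀)) : IsClosed (harmonicSpace T S : Set H₁) := by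
  have : (harmonicSpace T S : Set H₁) =
      ((fun u : H₁ => ((u, 0) : H₁ × H₂)) ⁻¹' (S.graph : Set (H₁ × H₂))) ∩
      ((fun u : H₁ => ((u, 0) : H₁ × H₀)) ⁻¹' (T.adjoint.graph : Set (H₁ × H₀))) := by
    ext u; simp [mem_harmonic_iff]
  rw [this]
  exact (hSc.preimage (continuous_id.prodMk continuous_const)).inter
    ((adjoint_graph_closed T hTd).preimage (continuous_id.prodMk continuous_const))

lemma estimate (T : H₀ →ₗ.[ℂ] H₁) (S : H₁ →ₗ.[ℂ] H₂) (hSc : S.IsClosed)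
    (hTd : Dense (T.domain : Set H₀)) (hcpt : CompactnessProperty T S) :
    ∃ C : ℝ, ∀ u s t, (u, s) ∈ S.graph → (u, t) ∈ T.adjoint.graph →
      u ∈ (harmonicSpace T S)ᗮ → ‖u‖ ≤ C * (‖s‖ + ‖t‖) := by
  by_contra hcon
  push_neg at hcon
  choose u s t h1 h2 h3 hlt using fun k : ℕ => hcon k
  have hpos : ∀ k, 0 < ‖u k‖ := fun k => lt_of_le_of_lt (by positivity) (hlt k)
  set c : ℕ → ℂ := fun k => ((‖u k‖⁻¹ : ℝ) : ℂ) with hc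
  set v : ℕ → H₁ := fun k => c k • u k with hv
  set s' : ℕ → H₂ := fun k => c k • s k with hs'
  set t' : ℕ → H₀ := fun k => c k • t k with ht'
  have hnc : ∀ k, ‖c k‖ = ‖u k‖⁻¹ := by
    intro k
    simp [hc, abs_of_nonneg (inv_nonneg.2 (norm_nonneg _))]
  have hm1 : ∀ k, (v k, s' k) ∈ S.graph := by
    intro k
    have := S.graph.smul_mem (c k) (h1 k)
    simpa [Prod.smul_mk] using this
  have hm2 : ∀ k, (v k, t' k) ∈ T.adjoint.graph := by
    intro k
    have := T.adjoint.graph.smul_mem (c k) (h2 k)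
    simpa [Prod.smul_mk] using this
  have hnorm : ∀ k, ‖v k‖ = 1 := by
    intro k
    rw [hv, norm_smul, hnc, inv_mul_cancel₀ (hpos k).ne']
  have hineq : ∀ k : ℕ, 1 ≤ k → ‖s' k‖ + ‖t' k‖ ≤ 1 / (k : ℝ) := by
    intro k hk
    have hkpos : (0:ℝ) < k := by exact_mod_cast hk
    have h2k := (hlt k).le
    have key : ‖s k‖ + ‖t k‖ ≤ (1 / (k:ℝ)) * ‖u k‖ := by
      calc ‖s k‖ + ‖t k‖ = (1/(k:ℝ)) * ((k:ℝ) * (‖s k‖ + ‖t k‖)) := by field_simp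
        _ ≤ (1/(k:ℝ)) * ‖u k‖ := by
            apply mul_le_mul_of_nonneg_left h2k (by positivity)
    have : ‖s' k‖ + ‖t' k‖ = ‖u k‖⁻¹ * (‖s k‖ + ‖t k‖) := by
      rw [hs', ht', norm_smul, norm_smul, hnc]; ring
    rw [this]
    rw [inv_mul_le_iff₀ (hpos k)]
    calc ‖s k‖ + ‖t k‖ ≤ (1 / (k:ℝ)) * ‖u k‖ := key
      _ = ‖u k‖ * (1/(k:ℝ)) := by ring
  have hs0 : Tendsto (fun k => ‖s' k‖) atTop (nhds 0) := by
    apply squeeze_zero' (Eventually.of_forall fun k => norm_nonneg _)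
      (Eventually.mono (eventually_ge_atTop 1) fun k hk =>
        le_trans (le_add_of_nonneg_right (norm_nonneg _)) (hineq k hk))
      tendsto_one_div_atTop_nhds_zero_nat
  have ht0 : Tendsto (fun k => ‖t' k‖) atTop (nhds 0) := by
    apply squeeze_zero' (Eventually.of_forall fun k => norm_nonneg _)
      (Eventually.mono (eventually_ge_atTop 1) fun k hk =>
        le_trans (le_add_of_nonneg_left (norm_nonneg _)) (hineq k hk))
      tendsto_one_div_atTop_nhds_zero_nat
  obtain ⟨φ, L, hφ, hL⟩ := hcpt v s' t' hm1 hm2 ⟨1, fun k => (hnorm k).le⟩ hs0 ht0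
  have hL1 : ‖L‖ = 1 := by
    have h1' : Tendsto (fun k => ‖(v ∘ φ) k‖) atTop (nhds ‖L‖) := hL.norm
    have h2' : (fun k => ‖(v ∘ φ) k‖) = fun _ => (1:ℝ) := funext fun k => hnorm (φ k)
    rw [h2'] at h1'
    exact tendsto_nhds_unique h1' tendsto_const_nhds
  have hs'0 : Tendsto s' atTop (nhds 0) := tendsto_zero_iff_norm_tendsto_zero.mpr hs0
  have ht'0 : Tendsto t' atTop (nhds 0) := tendsto_zero_iff_norm_tendsto_zero.mpr ht0
  have hLS : (L, (0:H₂)) ∈ S.graph := by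
    have hten : Tendsto (fun k => (v (φ k), s' (φ k))) atTop (nhds (L, (0:H₂))) :=
      hL.prodMk_nhds (hs'0.comp hφ.tendsto_atTop)
    exact hSc.mem_of_tendsto hten (Eventually.of_forall fun k => hm1 (φ k))
  have hLT : (L, (0:H₀)) ∈ T.adjoint.graph := by
    have hten : Tendsto (fun k => (v (φ k), t' (φ k))) atTop (nhds (L, (0:H₀))) :=
      hL.prodMk_nhds (ht'0.comp hφ.tendsto_atTop)
    exact (adjoint_graph_closed T hTd).mem_of_tendsto hten
      (Eventually.of_forall fun k => hm2 (φ k))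
  have hLperp : L ∈ (harmonicSpace T S)ᗮ := by
    refine (harmonicSpace T S).isClosed_orthogonal.mem_of_tendsto hL
      (Eventually.of_forall fun k => ?_)
    exact Submodule.smul_mem _ _ (h3 (φ k))
  have hLmem : L ∈ harmonicSpace T S := (mem_harmonic_iff T S L).mpr ⟨hLS, hLT⟩
  have : L = 0 := by
    have := (Submodule.mem_orthogonal _ L).1 hLperp L hLmem
    exact inner_self_eq_zero.mp this
  rw [this, norm_zero] at hL1
  norm_num at hL1

lemma pairing_bound (T : H₀ →ₗ.[ℂ] H₁) (S : H₁ →ₗ.[ℂ] H₂) (hSc : S.IsClosed)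
    (hTd : Dense (T.domain : Set H₀))
    (hRanKer : ∀ (x : H₀) (y : H₁), (x, y) ∈ T.graph → (y, (0 : H₂)) ∈ S.graph)
    (C : ℝ)
    (hC : ∀ u s t, (u, s) ∈ S.graph → (u, t) ∈ T.adjoint.graph →
      u ∈ (harmonicSpace T S)ᗮ → ‖u‖ ≤ C * (‖s‖ + ‖t‖))
    {f : H₁} (hf1 : (f, (0:H₂)) ∈ S.graph) (hf2 : f ∈ (harmonicSpace T S)ᗮ) :
    ∀ u w, (u, w) ∈ T.adjoint.graph → ‖⟪f, u⟫_ℂ‖ ≤ (C * ‖f‖) * ‖w‖ := by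
  intro u w huw
  haveI : CompleteSpace (kerS S) := (kerS_closed S hSc).completeSpace_coe
  haveI : CompleteSpace (harmonicSpace T S) :=
    (harmonic_closed T S hSc hTd).completeSpace_coe
  -- the orthogonal complement of Ker S is in Ker T†
  have hKperp : ∀ w' : H₁, w' ∈ (kerS S)ᗮ → (w', (0:H₀)) ∈ T.adjoint.graph := by
    intro w' hw'
    have key : ∀ x : T.domain, ⟪(0:H₀), (x:H₀)⟫_ℂ = ⟪w', T x⟫_ℂ := by
      intro x
      have hTx : T x ∈ kerS S := (mem_kerS S _).mpr (hRanKer x (T x) (T.mem_graph x))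
      rw [inner_zero_left, (Submodule.mem_orthogonal' _ _).1 hw' _ hTx]
    have hu : w' ∈ T.adjoint.domain :=
      T.mem_adjoint_domain_of_exists w' ⟨0, fun x => key x⟩
    have hval : T.adjoint ⟨w', hu⟩ = 0 := adjoint_apply_eq hTd ⟨w', hu⟩ (fun x => key x)
    exact T.adjoint.mem_graph_iff.mpr ⟨⟨w', hu⟩, rfl, hval⟩
  set v : H₁ := (Submodule.orthogonalProjectionOnto (kerS S) u : H₁) with hvdef
  have hv1 : u - v ∈ (kerS S)ᗮ := Submodule.sub_starProjection_mem_orthogonal u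
  have hvK : v ∈ kerS S := SetLike.coe_mem _
  have hvw : (v, w) ∈ T.adjoint.graph := by
    have := T.adjoint.graph.sub_mem huw (hKperp _ hv1)
    simpa using this
  set h : H₁ := (Submodule.orthogonalProjectionOnto (harmonicSpace T S) v : H₁) with hhdef
  have hhH : h ∈ harmonicSpace T S := SetLike.coe_mem _
  have hh1 : (h, (0:H₂)) ∈ S.graph := ((mem_harmonic_iff T S h).1 hhH).1
  have hh2 : (h, (0:H₀)) ∈ T.adjoint.graph := ((mem_harmonic_iff T S h).1 hhH).2
  set v' : H₁ := v - h with hv'def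
  have hv'perp : v' ∈ (harmonicSpace T S)ᗮ := Submodule.sub_starProjection_mem_orthogonal v
  have hv'S : (v', (0:H₂)) ∈ S.graph := by
    have := S.graph.sub_mem ((mem_kerS S v).1 hvK) hh1
    simpa using this
  have hv'T : (v', w) ∈ T.adjoint.graph := by
    have := T.adjoint.graph.sub_mem hvw hh2
    simpa using this
  have hbound : ‖v'‖ ≤ C * ‖w‖ := by
    have := hC v' 0 w hv'S hv'T hv'perp
    simpa using this
  -- now compute the pairing
  have e1 : ⟪f, u - v⟫_ℂ = 0 := (Submodule.mem_orthogonal _ _).1 hv1 f ((mem_kerS S f).mpr hf1)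
  have e2 : ⟪f, h⟫_ℂ = 0 := (Submodule.mem_orthogonal' _ _).1 hf2 h hhH
  have e3 : ⟪f, u⟫_ℂ = ⟪f, v'⟫_ℂ := by
    have : u = (u - v) + h + v' := by rw [hv'def]; abel
    rw [this, inner_add_right, inner_add_right, e1, e2]
    ring
  rw [e3]
  calc ‖⟪f, v'⟫_ℂ‖ ≤ ‖f‖ * ‖v'‖ := norm_inner_le_norm _ _
    _ ≤ ‖f‖ * (C * ‖w‖) := by
        apply mul_le_mul_of_nonneg_left hbound (norm_nonneg f)
    _ = (C * ‖f‖) * ‖w‖ := by ring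

lemma exists_preimage (T : H₀ →ₗ.[ℂ] H₁) (S : H₁ →ₗ.[ℂ] H₂)
    (hTc : T.IsClosed) (hTd : Dense (T.domain : Set H₀)) (hSc : S.IsClosed)
    (hRanKer : ∀ (x : H₀) (y : H₁), (x, y) ∈ T.graph → (y, (0 : H₂)) ∈ S.graph)
    (C : ℝ)
    (hC : ∀ u s t, (u, s) ∈ S.graph → (u, t) ∈ T.adjoint.graph →
      u ∈ (harmonicSpace T S)ᗮ → ‖u‖ ≤ C * (‖s‖ + ‖t‖))
    {f : H₁} (hf1 : (f, (0:H₂)) ∈ S.graph) (hf2 : f ∈ (harmonicSpace T S)ᗮ) :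
    ∃ x : H₀, (x, f) ∈ T.graph := by
  have hb := pairing_bound T S hSc hTd hRanKer C hC hf1 hf2
  have keyzero : ∀ d : H₁, (d, (0:H₀)) ∈ T.adjoint.graph → ⟪f, d⟫_ℂ = 0 := by
    intro d hd
    have := hb d 0 hd
    rw [norm_zero, mul_zero] at this
    exact norm_le_zero_iff.mp this
  set W : Submodule ℂ H₀ := T.adjoint.graph.map (LinearMap.snd ℂ H₁ H₀) with hWdef
  have hW : ∀ w : W, ∃ u : H₁, (u, (w:H₀)) ∈ T.adjoint.graph := by
    rintro ⟨w, hw⟩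
    obtain ⟨⟨a, b⟩, hp, hp2⟩ := Submodule.mem_map.mp hw
    simp only [LinearMap.snd_apply] at hp2
    subst hp2
    exact ⟨a, hp⟩
  set uof : W → H₁ := fun w => (hW w).choose with huofdef
  have huof : ∀ w : W, (uof w, (w:H₀)) ∈ T.adjoint.graph := fun w => (hW w).choose_spec
  have welldef : ∀ (u : H₁) (w : W), (u, (w:H₀)) ∈ T.adjoint.graph →
      ⟪f, uof w⟫_ℂ = ⟪f, u⟫_ℂ := by
    intro u w hu
    have hd : (uof w - u, (0:H₀)) ∈ T.adjoint.graph := by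
      have := T.adjoint.graph.sub_mem (huof w) hu
      simpa using this
    have := keyzero _ hd
    rw [inner_sub_right, sub_eq_zero] at this
    exact this
  set ℓ : W →ₗ[ℂ] ℂ :=
    { toFun := fun w => ⟪f, uof w⟫_ℂ
      map_add' := by
        intro w₁ w₂
        have hmem : (uof w₁ + uof w₂, ((w₁ + w₂ : W) : H₀)) ∈ T.adjoint.graph := by
          have := T.adjoint.graph.add_mem (huof w₁) (huof w₂)
          simpa using this
        show ⟪f, uof (w₁ + w₂)⟫_ℂ = ⟪f, uof w₁⟫_ℂ + ⟪f, uof w₂⟫_ℂ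
        rw [welldef _ (w₁ + w₂) hmem, inner_add_right]
      map_smul' := by
        intro c w
        have hmem : (c • uof w, ((c • w : W) : H₀)) ∈ T.adjoint.graph := by
          have := T.adjoint.graph.smul_mem c (huof w)
          simpa using this
        show ⟪f, uof (c • w)⟫_ℂ = (RingHom.id ℂ) c • ⟪f, uof w⟫_ℂ
        rw [welldef _ (c • w) hmem, inner_smul_right]
        rfl } with hℓdef
  have hℓbound : ∀ w : W, ‖ℓ w‖ ≤ (C * ‖f‖) * ‖w‖ := fun w => hb (uof w) w (huof w)
  set ℓc := ℓ.mkContinuous (C * ‖f‖) hℓbound with hℓcdef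
  obtain ⟨g, hg, -⟩ := exists_extension_norm_eq W ℓc
  set x : H₀ := (InnerProductSpace.toDual ℂ H₀).symm g with hxdef
  have hx : ∀ z : H₀, ⟪x, z⟫_ℂ = g z := fun z => InnerProductSpace.toDual_symm_apply
  refine ⟨x, mem_graph_of_forall_adjoint T hTc hTd ?_⟩
  intro u w huw
  have hwW : w ∈ W := Submodule.mem_map.mpr ⟨(u, w), huw, rfl⟩
  have hxw : ⟪x, w⟫_ℂ = ⟪f, u⟫_ℂ := by
    rw [hx w]
    have : g w = ℓc ⟨w, hwW⟩ := hg ⟨w, hwW⟩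
    rw [this]
    have : ℓc ⟨w, hwW⟩ = ⟪f, uof ⟨w, hwW⟩⟫_ℂ := rfl
    rw [this, welldef u ⟨w, hwW⟩ huw]
  calc ⟪u, f⟫_ℂ = starRingEnd ℂ ⟪f, u⟫_ℂ := (inner_conj_symm _ _).symm
    _ = starRingEnd ℂ ⟪x, w⟫_ℂ := by rw [hxw]
    _ = ⟪w, x⟫_ℂ := inner_conj_symm _ _

end Helpers

open LinearPMap in
set_option maxHeartbeats 1000000 in
/-- If `T : H₀ → H₁`, `S : H₁ → H₂` are closed, densely defined operators with
`Ran T ⊆ Ker S` and the compactness property holds, then `Ran T` is a closed subspace of `H₁`.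
Here `Ran T = {y : H₁ | ∃ x, (x, y) ∈ T.graph}`. -/
theorem stmt2 (T : H₀ →ₗ.[ℂ] H₁) (S : H₁ →ₗ.[ℂ] H₂)
    (hTclosed : T.IsClosed) (hTdense : Dense (T.domain : Set H₀))
    (hSclosed : S.IsClosed) (hSdense : Dense (S.domain : Set H₁))
    (hRanKer : ∀ (x : H₀) (y : H₁), (x, y) ∈ T.graph → (y, (0 : H₂)) ∈ S.graph)
    (hcpt : CompactnessProperty T S) :
    IsClosed {y : H₁ | ∃ x : H₀, (x, y) ∈ T.graph} := by
  obtain ⟨C, hC⟩ := estimate T S hSclosed hTdense hcpt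
  have hset : {y : H₁ | ∃ x : H₀, (x, y) ∈ T.graph} =
      (kerS S : Set H₁) ∩ ((harmonicSpace T S)ᗮ : Set H₁) := by
    ext y
    constructor
    · rintro ⟨x, hx⟩
      refine ⟨(mem_kerS S y).mpr (hRanKer x y hx), ?_⟩
      rw [SetLike.mem_coe, Submodule.mem_orthogonal]
      intro h hh
      obtain ⟨hhS, hhT⟩ := (mem_harmonic_iff T S h).1 hh
      obtain ⟨a, ha1, ha2⟩ := T.adjoint.mem_graph_iff.mp hhT
      obtain ⟨b, hb1, hb2⟩ := T.mem_graph_iff.mp hx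
      have hfa := (LinearPMap.adjoint_isFormalAdjoint hTdense) a b
      rw [ha2, ha1, hb1, hb2] at hfa
      rw [← hfa, inner_zero_left]
    · rintro ⟨h1, h2⟩
      exact exists_preimage T S hTclosed hTdense hSclosed hRanKer C hC
        ((mem_kerS S y).1 h1) h2
  rw [hset]
  exact (kerS_closed S hSclosed).inter (harmonicSpace T S).isClosed_orthogonal
end

section
/- Let H₀, H₁, H₂ be complex Hilbert spaces and let T : H₀ → H₁ and S : H₁ → H₂ be closed, densely defined linear operators with Ran T ⊆ Ker S. Assume the compactness property: every sequence (u_k) in Dom S ∩ Dom T* with sup_k ‖u_k‖ < ∞, ‖S u_k‖ → 0 and ‖T* u_k‖ → 0 has a subsequence converging in H₁. Set Ran(TT*) = {T(T*u) : u ∈ Dom T*, T*u ∈ Dom T} and Ran(S*S) = {S*(Su) : u ∈ Dom S, Su ∈ Dom S*}, and ℋ = Ker S ∩ Ker T*. Then the strong Hodge decomposition holds: the three subspaces Ran(TT*), Ran(S*S), ℋ are pairwise orthogonal and every u ∈ H₁ can be written as u = T(T*v) + S*(Sw) + h with h ∈ ℋ. -/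
open Filter

variable {H₀ H₁ H₂ : Type*}
  [NormedAddCommGroup H₀] [InnerProductSpace ℂ H₀] [CompleteSpace H₀]
  [NormedAddCommGroup H₁] [InnerProductSpace ℂ H₁] [CompleteSpace H₁]
  [NormedAddCommGroup H₂] [InnerProductSpace ℂ H₂] [CompleteSpace H₂]

section AuxLemmas

open LinearPMap

local notation "⟪" x ", " y "⟫" => @inner ℂ _ _ x y

variable {E F : Type*}
  [NormedAddCommGroup E] [InnerProductSpace ℂ E] [CompleteSpace E]
  [NormedAddCommGroup F] [InnerProductSpace ℂ F] [CompleteSpace F]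

/-- Graph characterization of the adjoint. -/
theorem my_adjoint_graph_iff (A : E →ₗ.[ℂ] F) (hA : Dense (A.domain : Set E)) {y : F} {z : E} :
    (y, z) ∈ A.adjoint.graph ↔ ∀ x : A.domain, ⟪z, (x : E)⟫ = ⟪y, A x⟫ := by
  constructor
  · intro h
    rw [LinearPMap.mem_graph_iff] at h
    obtain ⟨w, hw1, hw2⟩ := h
    intro x
    have h1 : (w : F) = y := hw1
    have h2 : A.adjoint w = z := hw2
    rw [← h2, ← h1]
    exact (A.adjoint_isFormalAdjoint hA) w x
  · intro h
    have hy : y ∈ A.adjoint.domain := LinearPMap.mem_adjoint_domain_of_exists _ ⟨z, h⟩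
    have : A.adjoint ⟨y, hy⟩ = z := LinearPMap.adjoint_apply_eq hA ⟨y, hy⟩ h
    exact A.adjoint.mem_graph_iff.mpr ⟨⟨y, hy⟩, rfl, this⟩

/-- The graph of the adjoint is closed. -/
theorem my_adjoint_graph_closed (A : E →ₗ.[ℂ] F) (hA : Dense (A.domain : Set E)) :
    IsClosed (A.adjoint.graph : Set (F × E)) := by
  have hset : (A.adjoint.graph : Set (F × E)) =
      ⋂ x : A.domain, {p : F × E | ⟪p.2, (x : E)⟫ = ⟪p.1, A x⟫} := by
    ext ⟨y, z⟩
    simp only [SetLike.mem_coe, my_adjoint_graph_iff A hA, Set.mem_iInter, Set.mem_setOf_eq]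
  rw [hset]
  refine isClosed_iInter fun x => isClosed_eq ?_ ?_
  · exact (continuous_snd.inner continuous_const)
  · exact (continuous_fst.inner continuous_const)

set_option maxHeartbeats 1000000 in
/-- If `⟪z, v⟫ = ⟪y, w⟫` for all `(y, z)` in the graph of the adjoint of a closed densely
defined operator `A`, then `(v, w)` belongs to the graph of `A`. -/
theorem my_graph_mem_of_adjoint (A : E →ₗ.[ℂ] F) (hAc : A.IsClosed)
    (hA : Dense (A.domain : Set E)) {v : E} {w : F}
    (h : ∀ y z, (y, z) ∈ A.adjoint.graph → ⟪z, v⟫ = ⟪y, w⟫) : (v, w) ∈ A.graph := by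
  classical
  set e : WithLp 2 (F × E) ≃ₗ[ℂ] F × E := WithLp.linearEquiv 2 ℂ (F × E) with he
  set W : Submodule ℂ (F × E) :=
    A.graph.comap ((-(LinearMap.snd ℂ F E)).prod (LinearMap.fst ℂ F E)) with hW
  have hWmem : ∀ p : F × E, p ∈ W ↔ (-p.2, p.1) ∈ A.graph := by
    intro p
    rw [hW, Submodule.mem_comap]
    rfl
  set W' : Submodule ℂ (WithLp 2 (F × E)) := W.comap (e : WithLp 2 (F × E) →ₗ[ℂ] F × E) with hW'
  have hW'mem : ∀ q : WithLp 2 (F × E), q ∈ W' ↔ (-(e q).2, (e q).1) ∈ A.graph := by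
    intro q
    rw [hW', Submodule.mem_comap]
    exact hWmem (e q)
  have hW'closed : IsClosed (W' : Set (WithLp 2 (F × E))) := by
    have : (W' : Set (WithLp 2 (F × E))) =
        (fun q : WithLp 2 (F × E) =>
          (-(WithLp.prodContinuousLinearEquiv 2 ℂ F E q).2,
            (WithLp.prodContinuousLinearEquiv 2 ℂ F E q).1)) ⁻¹' (A.graph : Set (E × F)) := by
      ext q
      simp only [SetLike.mem_coe, Set.mem_preimage, hW'mem q]
      rfl
    rw [this]
    exact hAc.preimage (by fun_prop)
  have horth : W'ᗮ = A.adjoint.graph.comap (e : WithLp 2 (F × E) →ₗ[ℂ] F × E) := by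
    ext q
    rw [Submodule.mem_orthogonal, Submodule.mem_comap]
    rw [show ((e : WithLp 2 (F × E) →ₗ[ℂ] F × E) q) = ((e q).1, (e q).2) from rfl]
    rw [my_adjoint_graph_iff A hA]
    constructor
    · intro hq' x
      have hp : (e.symm (A x, -(x : E))) ∈ W' := by
        rw [hW'mem, e.apply_symm_apply]
        simpa using A.mem_graph x
      have := hq' _ hp
      rw [WithLp.prod_inner_apply] at this
      have h1 : ((e.symm (A x, -(x : E)) : WithLp 2 (F × E)).ofLp.1) = A x := rfl
      have h2 : ((e.symm (A x, -(x : E)) : WithLp 2 (F × E)).ofLp.2) = -(x : E) := rfl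
      rw [h1, h2, inner_neg_left] at this
      have hq1 : (q : WithLp 2 (F × E)).ofLp.1 = (e q).1 := rfl
      have hq2 : (q : WithLp 2 (F × E)).ofLp.2 = (e q).2 := rfl
      rw [hq1, hq2] at this
      have h3 : ⟪A x, (e q).1⟫ = ⟪(x : E), (e q).2⟫ := by linear_combination this
      calc ⟪(e q).2, (x : E)⟫ = starRingEnd ℂ ⟪(x : E), (e q).2⟫ := (inner_conj_symm _ _).symm
        _ = starRingEnd ℂ ⟪A x, (e q).1⟫ := by rw [h3]
        _ = ⟪(e q).1, A x⟫ := inner_conj_symm _ _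
    · intro hq' p hp
      rw [hW'mem] at hp
      obtain ⟨d, hd1, hd2⟩ := A.mem_graph_iff.mp hp
      rw [WithLp.prod_inner_apply]
      have hfst : (p : WithLp 2 (F × E)).ofLp.1 = (e p).1 := rfl
      have hsnd : (p : WithLp 2 (F × E)).ofLp.2 = (e p).2 := rfl
      have hd1' : (d : E) = -(e p).2 := hd1
      have hd2' : A d = (e p).1 := hd2
      have hx := hq' d
      have hep2 : (e p).2 = -(d : E) := by rw [hd1', neg_neg]
      have hq1 : (q : WithLp 2 (F × E)).ofLp.1 = (e q).1 := rfl
      have hq2 : (q : WithLp 2 (F × E)).ofLp.2 = (e q).2 := rfl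
      rw [hfst, hsnd, ← hd2', hep2, inner_neg_left, hq1, hq2]
      have h3 : ⟪A d, (e q).1⟫ = ⟪(d : E), (e q).2⟫ := by
        calc ⟪A d, (e q).1⟫ = starRingEnd ℂ ⟪(e q).1, A d⟫ := (inner_conj_symm _ _).symm
          _ = starRingEnd ℂ ⟪(e q).2, (d : E)⟫ := by rw [hx]
          _ = ⟪(d : E), (e q).2⟫ := inner_conj_symm _ _
      linear_combination h3
  haveI : CompleteSpace W' := hW'closed.completeSpace_coe
  have hkey : (A.adjoint.graph.comap (e : WithLp 2 (F × E) →ₗ[ℂ] F × E))ᗮ = W' := by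
    rw [← horth, Submodule.orthogonal_orthogonal]
  have hq₀ : e.symm (w, -v) ∈ (A.adjoint.graph.comap (e : WithLp 2 (F × E) →ₗ[ℂ] F × E))ᗮ := by
    rw [Submodule.mem_orthogonal]
    intro p hp
    rw [Submodule.mem_comap] at hp
    have hp' : ((e p).1, (e p).2) ∈ A.adjoint.graph := hp
    have := h _ _ hp'
    rw [WithLp.prod_inner_apply]
    have hfst : ((e.symm (w, -v) : WithLp 2 (F × E)).ofLp.1) = w := rfl
    have hsnd : ((e.symm (w, -v) : WithLp 2 (F × E)).ofLp.2) = -v := rfl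
    have hpf : (p : WithLp 2 (F × E)).ofLp.1 = (e p).1 := rfl
    have hps : (p : WithLp 2 (F × E)).ofLp.2 = (e p).2 := rfl
    rw [hfst, hsnd, hpf, hps, inner_neg_right, this]
    ring
  rw [hkey, hW'mem] at hq₀
  have h1 : (e (e.symm (w, -v))).1 = w := by rw [e.apply_symm_apply]
  have h2 : (e (e.symm (w, -v))).2 = -v := by rw [e.apply_symm_apply]
  rw [h1, h2, neg_neg] at hq₀
  exact hq₀

theorem sub_orthogonalProjection_mem_orthogonal {K : Submodule ℂ E} [K.HasOrthogonalProjection]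
    (v : E) : v - (K.orthogonalProjectionOnto v : E) ∈ Kᗮ :=
  K.sub_starProjection_mem_orthogonal v

theorem inner_orthogonalProjection_left_eq_right (K : Submodule ℂ E) [K.HasOrthogonalProjection]
    (u v : E) : ⟪(K.orthogonalProjectionOnto u : E), v⟫ = ⟪u, (K.orthogonalProjectionOnto v : E)⟫ :=
  K.inner_starProjection_left_eq_right u v

theorem orthogonalProjection_eq_self_iff {K : Submodule ℂ E} [K.HasOrthogonalProjection] {v : E} :
    (K.orthogonalProjectionOnto v : E) = v ↔ v ∈ K :=
  Submodule.starProjection_eq_self_iff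

theorem eq_orthogonalProjection_of_mem_orthogonal {K : Submodule ℂ E} [K.HasOrthogonalProjection]
    {u v : E} (hv : v ∈ K) (hvo : u - v ∈ Kᗮ) : (K.orthogonalProjectionOnto u : E) = v :=
  Submodule.eq_starProjection_of_mem_orthogonal hv hvo

end AuxLemmas

local notation "⟪" x ", " y "⟫" => @inner ℂ _ _ x y

set_option maxHeartbeats 4000000 in
set_option synthInstance.maxHeartbeats 1000000 in
/-- Strong Hodge decomposition.  Here
`Ran (T T*) = {T (T* u) : u ∈ Dom T*, T* u ∈ Dom T}` and
`Ran (S* S) = {S* (S u) : u ∈ Dom S, S u ∈ Dom S*}` are encoded via graphs, and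
`ℋ = Ker S ∩ Ker T*`.  The three subspaces are pairwise orthogonal and they span `H₁`. -/
theorem stmt4 (T : H₀ →ₗ.[ℂ] H₁) (S : H₁ →ₗ.[ℂ] H₂)
    (hTclosed : T.IsClosed) (hTdense : Dense (T.domain : Set H₀))
    (hSclosed : S.IsClosed) (hSdense : Dense (S.domain : Set H₁))
    (hRanKer : ∀ (x : H₀) (y : H₁), (x, y) ∈ T.graph → (y, (0 : H₂)) ∈ S.graph)
    (hcpt : CompactnessProperty T S)
    (ranTTstar : Set H₁) (ranSstarS : Set H₁)
    (hTTstar : ranTTstar =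
      {w : H₁ | ∃ (u : H₁) (v : H₀), (u, v) ∈ T.adjoint.graph ∧ (v, w) ∈ T.graph})
    (hSstarS : ranSstarS =
      {w : H₁ | ∃ (u : H₁) (v : H₂), (u, v) ∈ S.graph ∧ (v, w) ∈ S.adjoint.graph}) :
    (∀ a ∈ ranTTstar, ∀ b ∈ ranSstarS, @inner ℂ _ _ a b = 0) ∧
    (∀ a ∈ ranTTstar, ∀ h ∈ harmonicSpace T S, @inner ℂ _ _ a h = 0) ∧
    (∀ b ∈ ranSstarS, ∀ h ∈ harmonicSpace T S, @inner ℂ _ _ b h = 0) ∧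
    (∀ u : H₁, ∃ a ∈ ranTTstar, ∃ b ∈ ranSstarS, ∃ h ∈ harmonicSpace T S,
      u = a + b + h) := by
  subst hTTstar hSstarS
  classical
  classical
  have hTadjclosed := my_adjoint_graph_closed T hTdense
  -- kernel of S as a submodule
  set kerS : Submodule ℂ H₁ :=
    S.graph.comap ((LinearMap.id : H₁ →ₗ[ℂ] H₁).prod (0 : H₁ →ₗ[ℂ] H₂)) with hkerS
  have hkerSmem : ∀ u : H₁, u ∈ kerS ↔ (u, (0 : H₂)) ∈ S.graph := by
    intro u
    simp only [hkerS, Submodule.mem_comap, LinearMap.prod_apply, LinearMap.id_coe, id_eq,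
      LinearMap.zero_apply, Pi.prod, Function.prod_apply]
  have hkerSclosed : IsClosed (kerS : Set H₁) := by
    have : (kerS : Set H₁) = (fun u : H₁ => (u, (0 : H₂))) ⁻¹' (S.graph : Set (H₁ × H₂)) := by
      ext u; simp [hkerSmem]
    rw [this]; exact hSclosed.preimage (continuous_id.prodMk continuous_const)
  -- range of T and its orthogonal complement
  set ranT : Submodule ℂ H₁ := T.graph.map (LinearMap.snd ℂ H₀ H₁) with hranT
  set NT : Submodule ℂ H₁ := ranTᗮ with hNT
  have hNTclosed : IsClosed (NT : Set H₁) := ranT.isClosed_orthogonal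
  have hNTmem : ∀ u : H₁, u ∈ NT ↔ (u, (0 : H₀)) ∈ T.adjoint.graph := by
    intro u
    rw [my_adjoint_graph_iff T hTdense]
    constructor
    · intro hu x
      have hmem : (T x : H₁) ∈ ranT := ⟨((x : H₀), T x), T.mem_graph x, rfl⟩
      have h0 := (Submodule.mem_orthogonal _ u).mp hu _ hmem
      rw [inner_zero_left, ← inner_conj_symm, h0, _root_.map_zero]
    · intro hx
      rw [Submodule.mem_orthogonal]
      rintro w ⟨p, hp, rfl⟩
      obtain ⟨x, hx1, hx2⟩ := T.mem_graph_iff.mp hp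
      simp only [LinearMap.snd_apply]
      rw [← hx2, ← inner_conj_symm, ← hx x, inner_zero_left, _root_.map_zero]
  have hranTker : ranT ≤ kerS := by
    rintro w ⟨p, hp, rfl⟩
    rw [hkerSmem, LinearMap.snd_apply]
    exact hRanKer p.1 p.2 hp
  have hNTorth : NTᗮ ≤ kerS := by
    rw [hNT, Submodule.orthogonal_orthogonal_eq_closure]
    exact Submodule.topologicalClosure_minimal _ hranTker hkerSclosed
  have hkerSorthNT : kerSᗮ ≤ NT := Submodule.orthogonal_le hranTker
  -- harmonic space
  set ℋ : Submodule ℂ H₁ := harmonicSpace T S with hℋ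
  have hmemℋ : ∀ u : H₁, u ∈ ℋ ↔
      (u, (0 : H₂)) ∈ S.graph ∧ (u, (0 : H₀)) ∈ T.adjoint.graph := by
    intro u
    simp only [hℋ, harmonicSpace, Submodule.mem_inf, Submodule.mem_comap, LinearMap.prod_apply,
      LinearMap.id_coe, id_eq, LinearMap.zero_apply, Pi.prod, Function.prod_apply]
  have hℋclosed : IsClosed (ℋ : Set H₁) := by
    have : (ℋ : Set H₁) = ((fun u : H₁ => (u, (0 : H₂))) ⁻¹' (S.graph : Set (H₁ × H₂))) ∩
        ((fun u : H₁ => (u, (0 : H₀))) ⁻¹' (T.adjoint.graph : Set (H₁ × H₀))) := by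
      ext u; simp [hmemℋ]
    rw [this]
    exact (hSclosed.preimage (continuous_id.prodMk continuous_const)).inter
      (hTadjclosed.preimage (continuous_id.prodMk continuous_const))
  -- the basic estimate
  have hEst : ∃ C : ℝ, 0 ≤ C ∧ ∀ (w : H₁) (s : H₂) (t : H₀), (w, s) ∈ S.graph →
      (w, t) ∈ T.adjoint.graph → w ∈ ℋᗮ → ‖w‖ ≤ C * (‖s‖ + ‖t‖) := by
    by_contra hcon
    push_neg at hcon
    choose w s t h1 h2 h3 h4 using fun k : ℕ => hcon (k + 1) (by positivity)
    have hwne : ∀ k, w k ≠ 0 := by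
      intro k hk
      have := h4 k
      rw [hk, norm_zero] at this
      have : ((k : ℝ) + 1) * (‖s k‖ + ‖t k‖) ≥ 0 := by positivity
      linarith [h4 k]
    set c : ℕ → ℂ := fun k => ((‖w k‖⁻¹ : ℝ) : ℂ) with hc
    set w' : ℕ → H₁ := fun k => c k • w k with hw'
    set s' : ℕ → H₂ := fun k => c k • s k with hs'
    set t' : ℕ → H₀ := fun k => c k • t k with ht'
    have hnw : ∀ k, ‖w' k‖ = 1 := by
      intro k
      have hwpos : (0 : ℝ) < ‖w k‖ := norm_pos_iff.mpr (hwne k)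
      rw [hw', norm_smul, hc]
      simp only [Complex.norm_real, Real.norm_eq_abs, abs_inv, abs_norm]
      field_simp
    have hmem1 : ∀ k, (w' k, s' k) ∈ S.graph := by
      intro k
      have := S.graph.smul_mem (c k) (h1 k)
      simpa [Prod.smul_mk] using this
    have hmem2 : ∀ k, (w' k, t' k) ∈ T.adjoint.graph := by
      intro k
      have := T.adjoint.graph.smul_mem (c k) (h2 k)
      simpa [Prod.smul_mk] using this
    have hperp : ∀ k, w' k ∈ ℋᗮ := fun k => Submodule.smul_mem _ _ (h3 k)
    have hsb : ∀ k, ‖s' k‖ ≤ 1 / ((k : ℝ) + 1) := by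
      intro k
      have hwpos : (0 : ℝ) < ‖w k‖ := norm_pos_iff.mpr (hwne k)
      have hk1 : (0 : ℝ) < (k : ℝ) + 1 := by positivity
      have : ((k : ℝ) + 1) * ‖s k‖ ≤ ((k : ℝ) + 1) * (‖s k‖ + ‖t k‖) := by
        nlinarith [norm_nonneg (t k)]
      have hlt : ((k : ℝ) + 1) * ‖s k‖ < ‖w k‖ := lt_of_le_of_lt this (h4 k)
      rw [hs', norm_smul, hc]
      simp only [Complex.norm_real, Real.norm_eq_abs, abs_inv, abs_norm]
      rw [le_div_iff₀ hk1]
      calc ‖w k‖⁻¹ * ‖s k‖ * ((k : ℝ) + 1) = ‖w k‖⁻¹ * (((k : ℝ) + 1) * ‖s k‖) := by ring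
        _ ≤ ‖w k‖⁻¹ * ‖w k‖ :=
            mul_le_mul_of_nonneg_left (le_of_lt hlt) (inv_nonneg.mpr (norm_nonneg _))
        _ = 1 := inv_mul_cancel₀ (ne_of_gt hwpos)
    have htb : ∀ k, ‖t' k‖ ≤ 1 / ((k : ℝ) + 1) := by
      intro k
      have hwpos : (0 : ℝ) < ‖w k‖ := norm_pos_iff.mpr (hwne k)
      have hk1 : (0 : ℝ) < (k : ℝ) + 1 := by positivity
      have : ((k : ℝ) + 1) * ‖t k‖ ≤ ((k : ℝ) + 1) * (‖s k‖ + ‖t k‖) := by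
        nlinarith [norm_nonneg (s k)]
      have hlt : ((k : ℝ) + 1) * ‖t k‖ < ‖w k‖ := lt_of_le_of_lt this (h4 k)
      rw [ht', norm_smul, hc]
      simp only [Complex.norm_real, Real.norm_eq_abs, abs_inv, abs_norm]
      rw [le_div_iff₀ hk1]
      calc ‖w k‖⁻¹ * ‖t k‖ * ((k : ℝ) + 1) = ‖w k‖⁻¹ * (((k : ℝ) + 1) * ‖t k‖) := by ring
        _ ≤ ‖w k‖⁻¹ * ‖w k‖ :=
            mul_le_mul_of_nonneg_left (le_of_lt hlt) (inv_nonneg.mpr (norm_nonneg _))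
        _ = 1 := inv_mul_cancel₀ (ne_of_gt hwpos)
    have hstend : Tendsto (fun k => ‖s' k‖) atTop (nhds 0) :=
      squeeze_zero (fun k => norm_nonneg _) hsb tendsto_one_div_add_atTop_nhds_zero_nat
    have httend : Tendsto (fun k => ‖t' k‖) atTop (nhds 0) :=
      squeeze_zero (fun k => norm_nonneg _) htb tendsto_one_div_add_atTop_nhds_zero_nat
    obtain ⟨φ, L, hφ, hL⟩ := hcpt w' s' t' hmem1 hmem2 ⟨1, fun k => le_of_eq (hnw k)⟩ hstend httend
    have hLnorm : ‖L‖ = 1 := by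
      have h1' : Tendsto (fun k => ‖(w' ∘ φ) k‖) atTop (nhds ‖L‖) := hL.norm
      have h2' : (fun k => ‖(w' ∘ φ) k‖) = fun _ => (1 : ℝ) := funext fun k => hnw (φ k)
      rw [h2'] at h1'
      exact (tendsto_const_nhds_iff.mp h1').symm
    have hsφ : Tendsto (fun k => s' (φ k)) atTop (nhds 0) := by
      have := (tendsto_zero_iff_norm_tendsto_zero.mpr hstend).comp hφ.tendsto_atTop
      exact this
    have htφ : Tendsto (fun k => t' (φ k)) atTop (nhds 0) := by
      exact (tendsto_zero_iff_norm_tendsto_zero.mpr httend).comp hφ.tendsto_atTop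
    have hLS : (L, (0 : H₂)) ∈ S.graph := by
      apply hSclosed.mem_of_tendsto (hL.prodMk_nhds hsφ)
      exact Eventually.of_forall fun k => hmem1 (φ k)
    have hLT : (L, (0 : H₀)) ∈ T.adjoint.graph := by
      apply hTadjclosed.mem_of_tendsto (hL.prodMk_nhds htφ)
      exact Eventually.of_forall fun k => hmem2 (φ k)
    have hLperp : L ∈ ℋᗮ := by
      have : IsClosed (ℋᗮ : Set H₁) := ℋ.isClosed_orthogonal
      exact this.mem_of_tendsto hL (Eventually.of_forall fun k => hperp (φ k))
    have hLℋ : L ∈ ℋ := (hmemℋ L).mpr ⟨hLS, hLT⟩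
    have : ⟪L, L⟫ = 0 := (Submodule.mem_orthogonal _ L).mp hLperp L hLℋ
    rw [inner_self_eq_zero] at this
    rw [this, norm_zero] at hLnorm
    norm_num at hLnorm
  obtain ⟨C, hC0, hC⟩ := hEst
  haveI : CompleteSpace ℋ := hℋclosed.completeSpace_coe
  haveI : Submodule.HasOrthogonalProjection ℋ := inferInstance
  haveI : CompleteSpace kerS := hkerSclosed.completeSpace_coe
  haveI : Submodule.HasOrthogonalProjection kerS := inferInstance
  haveI : CompleteSpace NT := hNTclosed.completeSpace_coe
  haveI : Submodule.HasOrthogonalProjection NT := inferInstance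
  have main : ∀ u0 : H₁,
      (∃ a, (∃ (uu : H₁) (v : H₀), (uu, v) ∈ T.adjoint.graph ∧ (v, a) ∈ T.graph) ∧
       ∃ b, (∃ (uu : H₁) (v : H₂), (uu, v) ∈ S.graph ∧ (v, b) ∈ S.adjoint.graph) ∧
       ∃ h ∈ ℋ, u0 = a + b + h) := by
    intro u0
    set h : H₁ := ↑(Submodule.orthogonalProjectionOnto ℋ u0) with hh
    set f : H₁ := u0 - h with hfdef
    have hfperp : f ∈ ℋᗮ := sub_orthogonalProjection_mem_orthogonal u0
    set e : WithLp 2 (H₂ × H₀) ≃ₗ[ℂ] H₂ × H₀ := WithLp.linearEquiv 2 ℂ (H₂ × H₀) with he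
    set e' : WithLp 2 (H₂ × H₀) →ₗ[ℂ] H₂ × H₀ := (e : WithLp 2 (H₂ × H₀) →ₗ[ℂ] H₂ × H₀) with he'
    set pred : H₁ → H₂ × H₀ → Prop :=
      fun w p => (w, p.1) ∈ S.graph ∧ (w, p.2) ∈ T.adjoint.graph ∧ w ∈ ℋᗮ with hpred
    have hpredadd : ∀ w w' p p', pred w p → pred w' p' → pred (w + w') (p + p') := by
      rintro w w' p p' ⟨a1, a2, a3⟩ ⟨b1, b2, b3⟩
      exact ⟨S.graph.add_mem a1 b1, T.adjoint.graph.add_mem a2 b2, Submodule.add_mem _ a3 b3⟩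
    have hpredsmul : ∀ (c : ℂ) w p, pred w p → pred (c • w) (c • p) := by
      rintro c w p ⟨a1, a2, a3⟩
      exact ⟨S.graph.smul_mem c a1, T.adjoint.graph.smul_mem c a2, Submodule.smul_mem _ c a3⟩
    have huniq : ∀ w w' p, pred w p → pred w' p → w = w' := by
      rintro w w' p ⟨a1, a2, a3⟩ ⟨b1, b2, b3⟩
      have hd1 : (w - w', (0 : H₂)) ∈ S.graph := by
        have := S.graph.sub_mem a1 b1; simpa using this
      have hd2 : (w - w', (0 : H₀)) ∈ T.adjoint.graph := by
        have := T.adjoint.graph.sub_mem a2 b2; simpa using this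
      have hdℋ : w - w' ∈ ℋ := (hmemℋ _).mpr ⟨hd1, hd2⟩
      have hdperp : w - w' ∈ ℋᗮ := Submodule.sub_mem _ a3 b3
      have : ⟪w - w', w - w'⟫ = 0 := (Submodule.mem_orthogonal _ _).mp hdperp _ hdℋ
      rw [inner_self_eq_zero, sub_eq_zero] at this
      exact this
    set K₀ : Submodule ℂ (H₂ × H₀) :=
      { carrier := {p | ∃ w, pred w p}
        zero_mem' := ⟨0, S.graph.zero_mem, T.adjoint.graph.zero_mem, Submodule.zero_mem _⟩
        add_mem' := fun ⟨w, hw⟩ ⟨w', hw'⟩ => ⟨w + w', hpredadd _ _ _ _ hw hw'⟩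
        smul_mem' := fun c p ⟨w, hw⟩ => ⟨c • w, hpredsmul c w p hw⟩ } with hK₀
    have hK₀mem : ∀ p : H₂ × H₀, p ∈ K₀ ↔ ∃ w, pred w p := fun p => Iff.rfl
    set K : Submodule ℂ (WithLp 2 (H₂ × H₀)) := K₀.comap e' with hK
    have hK₀closed : IsClosed (K₀ : Set (H₂ × H₀)) := by
      apply IsSeqClosed.isClosed
      intro x p hxmem hxlim
      choose w hw using hxmem
      have hx1 : Tendsto (fun n => (x n).1) atTop (nhds p.1) :=
        (continuous_fst.tendsto p).comp hxlim
      have hx2 : Tendsto (fun n => (x n).2) atTop (nhds p.2) :=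
        (continuous_snd.tendsto p).comp hxlim
      have hcauchy : CauchySeq w := by
        rw [Metric.cauchySeq_iff]
        intro ε hε
        have hxc : CauchySeq x := hxlim.cauchySeq
        rw [Metric.cauchySeq_iff] at hxc
        obtain ⟨N, hN⟩ := hxc (ε / (2 * C + 1)) (by positivity)
        refine ⟨N, fun m hm n hn => ?_⟩
        have hsub : pred (w m - w n) (x m - x n) := by
          obtain ⟨a1, a2, a3⟩ := hw m
          obtain ⟨b1, b2, b3⟩ := hw n
          exact ⟨S.graph.sub_mem a1 b1, T.adjoint.graph.sub_mem a2 b2,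
            Submodule.sub_mem _ a3 b3⟩
        have hest := hC _ _ _ hsub.1 hsub.2.1 hsub.2.2
        have hd := hN m hm n hn
        rw [dist_eq_norm] at hd ⊢
        have h1n : ‖(x m - x n).1‖ ≤ ‖x m - x n‖ := norm_fst_le _
        have h2n : ‖(x m - x n).2‖ ≤ ‖x m - x n‖ := norm_snd_le _
        calc ‖w m - w n‖ ≤ C * (‖(x m - x n).1‖ + ‖(x m - x n).2‖) := hest
          _ ≤ C * (2 * ‖x m - x n‖) := by nlinarith
          _ < ε := by
            have hpos : (0:ℝ) < 2*C+1 := by positivity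
            have h7 := mul_lt_mul_of_pos_left hd hpos
            have he : (2*C+1) * (ε/(2*C+1)) = ε := by field_simp
            nlinarith [norm_nonneg (x m - x n)]
      obtain ⟨Wl, hWl⟩ := cauchySeq_tendsto_of_complete hcauchy
      refine ⟨Wl, ?_, ?_, ?_⟩
      · exact hSclosed.mem_of_tendsto (hWl.prodMk_nhds hx1)
          (Eventually.of_forall fun n => (hw n).1)
      · exact hTadjclosed.mem_of_tendsto (hWl.prodMk_nhds hx2)
          (Eventually.of_forall fun n => (hw n).2.1)
      · exact (ℋ.isClosed_orthogonal).mem_of_tendsto hWl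
          (Eventually.of_forall fun n => (hw n).2.2)
    have hKclosed : IsClosed (K : Set (WithLp 2 (H₂ × H₀))) := by
      have hset : (K : Set _) =
          (WithLp.prodContinuousLinearEquiv 2 ℂ H₂ H₀) ⁻¹' (K₀ : Set (H₂ × H₀)) := rfl
      rw [hset]
      exact hK₀closed.preimage (WithLp.prodContinuousLinearEquiv 2 ℂ H₂ H₀).continuous
    haveI : CompleteSpace K := hKclosed.completeSpace_coe
    have hKmem : ∀ q : WithLp 2 (H₂ × H₀), q ∈ K → ∃ w, pred w (e' q) :=
      fun q hq => Submodule.mem_comap.mp hq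
    set wmap : K → H₁ := fun q => (hKmem ↑q q.2).choose with hwmap
    have hwspec : ∀ q : K, pred (wmap q) (e' ↑q) := fun q => (hKmem ↑q q.2).choose_spec
    have hwadd : ∀ q r : K, wmap (q + r) = wmap q + wmap r := by
      intro q r
      refine huniq _ _ (e' ↑(q + r)) (hwspec (q + r)) ?_
      have hcoe : e' ↑(q + r) = e' ↑q + e' ↑r := by rw [Submodule.coe_add, _root_.map_add]
      rw [hcoe]
      exact hpredadd _ _ _ _ (hwspec q) (hwspec r)
    have hwsmul : ∀ (c : ℂ) (q : K), wmap (c • q) = c • wmap q := by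
      intro c q
      refine huniq _ _ (e' ↑(c • q)) (hwspec (c • q)) ?_
      have hcoe : e' ↑(c • q) = c • (e' ↑q) := by rw [Submodule.coe_smul, _root_.map_smul]
      rw [hcoe]
      exact hpredsmul c _ _ (hwspec q)
    set wlin : K →ₗ[ℂ] H₁ :=
      { toFun := wmap, map_add' := hwadd, map_smul' := hwsmul } with hwlin
    set ℓ : K →ₗ[ℂ] ℂ :=
      ((innerSL ℂ f : H₁ →L[ℂ] ℂ) : H₁ →ₗ[ℂ] ℂ).comp wlin with hℓ
    have hfst : ∀ x : WithLp 2 (H₂ × H₀), ‖(e' x).1‖ ≤ ‖x‖ := by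
      intro x
      have hsq := WithLp.prod_norm_sq_eq_of_L2 x
      have h1 : (e' x).1 = x.fst := rfl
      rw [h1]
      have h2 : ‖x.fst‖ ^ 2 ≤ ‖x‖ ^ 2 := by nlinarith [sq_nonneg ‖x.snd‖]
      exact (abs_le_of_sq_le_sq' h2 (norm_nonneg x)).2
    have hsnd : ∀ x : WithLp 2 (H₂ × H₀), ‖(e' x).2‖ ≤ ‖x‖ := by
      intro x
      have hsq := WithLp.prod_norm_sq_eq_of_L2 x
      have h1 : (e' x).2 = x.snd := rfl
      rw [h1]
      have h2 : ‖x.snd‖ ^ 2 ≤ ‖x‖ ^ 2 := by nlinarith [sq_nonneg ‖x.fst‖]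
      exact (abs_le_of_sq_le_sq' h2 (norm_nonneg x)).2
    have hbound : ∀ q : K, ‖ℓ q‖ ≤ (‖f‖ * (2 * C)) * ‖q‖ := by
      intro q
      have h1 : ℓ q = ⟪f, wmap q⟫ := rfl
      have h2 : ‖⟪f, wmap q⟫‖ ≤ ‖f‖ * ‖wmap q‖ := norm_inner_le_norm _ _
      obtain ⟨a1, a2, a3⟩ := hwspec q
      have h3 := hC _ _ _ a1 a2 a3
      have h4 : ‖(e' ↑q).1‖ ≤ ‖(q : WithLp 2 (H₂ × H₀))‖ := hfst _
      have h5 : ‖(e' ↑q).2‖ ≤ ‖(q : WithLp 2 (H₂ × H₀))‖ := hsnd _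
      have h6 : ‖(q : WithLp 2 (H₂ × H₀))‖ = ‖q‖ := rfl
      rw [h1]
      calc ‖⟪f, wmap q⟫‖ ≤ ‖f‖ * ‖wmap q‖ := h2
        _ ≤ ‖f‖ * (C * (‖(e' ↑q).1‖ + ‖(e' ↑q).2‖)) := by
            apply mul_le_mul_of_nonneg_left h3 (norm_nonneg f)
        _ = (‖f‖ * C) * (‖(e' ↑q).1‖ + ‖(e' ↑q).2‖) := by ring
        _ ≤ (‖f‖ * C) * (2 * ‖(q : WithLp 2 (H₂ × H₀))‖) := by
            apply mul_le_mul_of_nonneg_left _ (by positivity)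
            linarith
        _ = (‖f‖ * (2 * C)) * ‖q‖ := by rw [← h6]; ring
    set ℓc : K →L[ℂ] ℂ := LinearMap.mkContinuous ℓ (‖f‖ * (2 * C)) hbound with hℓc
    set qψ : K := (InnerProductSpace.toDual ℂ K).symm ℓc with hqψ
    have hrepr : ∀ p : K, ⟪(qψ : WithLp 2 (H₂ × H₀)), (p : WithLp 2 (H₂ × H₀))⟫ = ⟪f, wmap p⟫ := by
      intro p
      have h1 : ⟪qψ, p⟫ = ℓc p := InnerProductSpace.toDual_symm_apply
      have h2 : ℓc p = ⟪f, wmap p⟫ := rfl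
      rw [← h1.trans h2, Submodule.coe_inner]
    set sψ : H₂ := (e' ↑qψ).1 with hsψ
    set tψ : H₀ := (e' ↑qψ).2 with htψ
    set ψ : H₁ := wmap qψ with hψ
    have hψS : (ψ, sψ) ∈ S.graph := (hwspec qψ).1
    have hψT : (ψ, tψ) ∈ T.adjoint.graph := (hwspec qψ).2.1
    have hstar0 : ∀ w s t, (w, s) ∈ S.graph → (w, t) ∈ T.adjoint.graph → w ∈ ℋᗮ →
        ⟪f, w⟫ = ⟪sψ, s⟫ + ⟪tψ, t⟫ := by
      intro w s t hws hwt hwperp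
      have hqmem : (e.symm (s, t)) ∈ K := by
        rw [hK, Submodule.mem_comap]
        have hco : e' (e.symm (s, t)) = (s, t) := e.apply_symm_apply (s, t)
        rw [hK₀mem, hco]
        exact ⟨w, hws, hwt, hwperp⟩
      set p : K := ⟨e.symm (s, t), hqmem⟩ with hp
      have hep : e' ↑p = (s, t) := e.apply_symm_apply (s, t)
      have hwp : wmap p = w := by
        refine huniq _ _ (e' ↑p) (hwspec p) ?_
        rw [hep]
        exact ⟨hws, hwt, hwperp⟩
      have hr := hrepr p
      rw [hwp] at hr
      rw [← hr, WithLp.prod_inner_apply]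
      have hc1 : ((p : WithLp 2 (H₂ × H₀)).ofLp.1) = s := congrArg Prod.fst hep
      have hc2 : ((p : WithLp 2 (H₂ × H₀)).ofLp.2) = t := congrArg Prod.snd hep
      have hc3 : ((qψ : WithLp 2 (H₂ × H₀)).ofLp.1) = sψ := rfl
      have hc4 : ((qψ : WithLp 2 (H₂ × H₀)).ofLp.2) = tψ := rfl
      rw [hc1, hc2, hc3, hc4]
    have hstar : ∀ w s t, (w, s) ∈ S.graph → (w, t) ∈ T.adjoint.graph →
        ⟪f, w⟫ = ⟪sψ, s⟫ + ⟪tψ, t⟫ := by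
      intro w s t hws hwt
      have hpmem : (↑(Submodule.orthogonalProjectionOnto ℋ w) : H₁) ∈ ℋ := (Submodule.orthogonalProjectionOnto ℋ w).2
      obtain ⟨hpS, hpT⟩ := (hmemℋ _).mp hpmem
      have h1 : (w - ↑(Submodule.orthogonalProjectionOnto ℋ w), s) ∈ S.graph := by
        have := S.graph.sub_mem hws hpS; simpa using this
      have h2 : (w - ↑(Submodule.orthogonalProjectionOnto ℋ w), t) ∈ T.adjoint.graph := by
        have := T.adjoint.graph.sub_mem hwt hpT; simpa using this
      have h3 := hstar0 _ _ _ h1 h2 (sub_orthogonalProjection_mem_orthogonal w)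
      have h4 : ⟪f, (↑(Submodule.orthogonalProjectionOnto ℋ w) : H₁)⟫ = 0 := by
        rw [← inner_conj_symm, (Submodule.mem_orthogonal _ f).mp hfperp _ hpmem, _root_.map_zero]
      rw [inner_sub_right, h4, sub_zero] at h3
      exact h3
    set gB : H₁ := ↑(Submodule.orthogonalProjectionOnto NT f) with hgB
    have hSadj : (sψ, gB) ∈ S.adjoint.graph := by
      rw [my_adjoint_graph_iff S hSdense]
      intro x
      have hu1 : (↑x : H₁) - ↑(Submodule.orthogonalProjectionOnto NT ↑x) ∈ NTᗮ :=
        sub_orthogonalProjection_mem_orthogonal _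
      have hu1S : ((↑x : H₁) - ↑(Submodule.orthogonalProjectionOnto NT ↑x), (0 : H₂)) ∈ S.graph :=
        (hkerSmem _).mp (hNTorth hu1)
      have hu2S : ((↑(Submodule.orthogonalProjectionOnto NT (↑x : H₁)) : H₁), S x) ∈ S.graph := by
        have := S.graph.sub_mem (S.mem_graph x) hu1S
        simpa using this
      have hu2T : ((↑(Submodule.orthogonalProjectionOnto NT (↑x : H₁)) : H₁), (0 : H₀)) ∈ T.adjoint.graph :=
        (hNTmem _).mp (Submodule.orthogonalProjectionOnto NT (↑x : H₁)).2
      have hthis := hstar _ _ _ hu2S hu2T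
      rw [inner_zero_right, add_zero] at hthis
      rw [← inner_orthogonalProjection_left_eq_right] at hthis
      exact hthis
    set gA : H₁ := ↑(Submodule.orthogonalProjectionOnto kerS f) with hgA
    have hTmemg : (tψ, gA) ∈ T.graph := by
      apply my_graph_mem_of_adjoint T hTclosed hTdense
      intro y z hyz
      have hy1ker : (↑(Submodule.orthogonalProjectionOnto kerS y) : H₁) ∈ kerS := (Submodule.orthogonalProjectionOnto kerS y).2
      have hy1S : ((↑(Submodule.orthogonalProjectionOnto kerS y) : H₁), (0 : H₂)) ∈ S.graph :=
        (hkerSmem _).mp hy1ker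
      have hyNT : y - ↑(Submodule.orthogonalProjectionOnto kerS y) ∈ NT :=
        hkerSorthNT (sub_orthogonalProjection_mem_orthogonal y)
      have hyT0 : (y - ↑(Submodule.orthogonalProjectionOnto kerS y), (0 : H₀)) ∈ T.adjoint.graph :=
        (hNTmem _).mp hyNT
      have hy1T : ((↑(Submodule.orthogonalProjectionOnto kerS y) : H₁), z) ∈ T.adjoint.graph := by
        have := T.adjoint.graph.sub_mem hyz hyT0
        simpa using this
      have hthis := hstar _ _ _ hy1S hy1T
      rw [inner_zero_right, zero_add] at hthis
      rw [← inner_orthogonalProjection_left_eq_right] at hthis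
      -- hthis : ⟪gA, y⟫ = ⟪tψ, z⟫
      calc ⟪z, tψ⟫ = starRingEnd ℂ ⟪tψ, z⟫ := (inner_conj_symm _ _).symm
        _ = starRingEnd ℂ ⟪gA, y⟫ := by rw [hthis]
        _ = ⟪y, gA⟫ := inner_conj_symm _ _
    -- the sum of the two projections is f
    haveI : CompleteSpace (NTᗮ : Submodule ℂ H₁) := (NT.isClosed_orthogonal).completeSpace_coe
    haveI : Submodule.HasOrthogonalProjection (NTᗮ : Submodule ℂ H₁) :=
      inferInstance
    have hNToo : NTᗮᗮ = NT := NT.orthogonal_orthogonal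
    have hsum : gA + gB = f := by
      set z' : H₁ := gA - ↑(Submodule.orthogonalProjectionOnto NTᗮ gA) with hz'
      have hz'NT : z' ∈ NT := by
        rw [← hNToo]; exact sub_orthogonalProjection_mem_orthogonal gA
      have hz'ker : z' ∈ kerS :=
        Submodule.sub_mem _ (Submodule.orthogonalProjectionOnto kerS f).2
          (hNTorth (Submodule.orthogonalProjectionOnto NTᗮ gA).2)
      have hz'ℋ : z' ∈ ℋ := (hmemℋ _).mpr ⟨(hkerSmem _).mp hz'ker, (hNTmem _).mp hz'NT⟩
      have hz'0 : z' = 0 := by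
        have hAA : ⟪z', gA⟫ = ⟪z', f⟫ := by
          have h1 := inner_orthogonalProjection_left_eq_right kerS z' f
          have h2 : (↑(Submodule.orthogonalProjectionOnto kerS z') : H₁) = z' :=
            orthogonalProjection_eq_self_iff.mpr hz'ker
          rw [h2] at h1
          exact h1.symm
        have hzf : ⟪z', f⟫ = 0 := (Submodule.mem_orthogonal _ f).mp hfperp _ hz'ℋ
        have hterm2 : ⟪z', (↑(Submodule.orthogonalProjectionOnto NTᗮ gA) : H₁)⟫ = 0 :=
          (Submodule.mem_orthogonal NT _).mp (Submodule.orthogonalProjectionOnto NTᗮ gA).2 z' hz'NT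
        have hh := inner_sub_right (𝕜 := ℂ) z' gA (↑(Submodule.orthogonalProjectionOnto NTᗮ gA))
        rw [← hz', hAA, hzf, hterm2, sub_zero] at hh
        rw [← inner_self_eq_zero (𝕜 := ℂ)]
        exact hh
      have hgANTperp : gA ∈ NTᗮ := by
        have hq : gA = ↑(Submodule.orthogonalProjectionOnto NTᗮ gA) := by
          have h0 := hz'0
          rw [hz', sub_eq_zero] at h0
          exact h0
        rw [hq]
        exact (Submodule.orthogonalProjectionOnto NTᗮ gA).2
      have hfgA : f - gA ∈ kerSᗮ := sub_orthogonalProjection_mem_orthogonal f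
      have hPB : (↑(Submodule.orthogonalProjectionOnto NT f) : H₁) = f - gA :=
        eq_orthogonalProjection_of_mem_orthogonal (hkerSorthNT hfgA)
          (by rw [sub_sub_cancel]; exact hgANTperp)
      rw [hgB, hPB]
      abel
    refine ⟨gA, ⟨ψ, tψ, hψT, hTmemg⟩, gB, ⟨ψ, sψ, hψS, hSadj⟩, h,
      (Submodule.orthogonalProjectionOnto ℋ u0).2, ?_⟩
    rw [hsum, hfdef]
    abel
  refine ⟨?_, ?_, ?_, ?_⟩
  · rintro a ⟨u, v, huv, hvw⟩ b ⟨u', v', hu'v', hv'w'⟩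
    have hker : (a, (0 : H₂)) ∈ S.graph := hRanKer v a hvw
    obtain ⟨d, hd1, hd2⟩ := S.mem_graph_iff.mp hker
    have := (my_adjoint_graph_iff S hSdense).mp hv'w' d
    simp only [hd1, hd2, inner_zero_right] at this
    rw [← inner_conj_symm, this, _root_.map_zero]
  · rintro a ⟨u, v, huv, hvw⟩ h hh
    have hadj := ((hmemℋ h).mp hh).2
    obtain ⟨dt, hdt1, hdt2⟩ := T.mem_graph_iff.mp hvw
    have := (my_adjoint_graph_iff T hTdense).mp hadj dt
    simp only [hdt2, inner_zero_left] at this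
    rw [← inner_conj_symm, ← this, _root_.map_zero]
  · rintro b ⟨u', v', hu'v', hv'w'⟩ h hh
    have hker := ((hmemℋ h).mp hh).1
    obtain ⟨d, hd1, hd2⟩ := S.mem_graph_iff.mp hker
    have := (my_adjoint_graph_iff S hSdense).mp hv'w' d
    simp only [hd1, hd2, inner_zero_right] at this
    exact this
  intro u0
  obtain ⟨a, ha, b, hb, h, hhmem, heq⟩ := main u0
  exact ⟨a, ha, b, hb, h, hhmem, heq⟩
end

section
/- Let V ⊆ ℂⁿ be open and let L₁ and L₂ be closed subsets of V, each pseudoconcave in V. Then L₁ ∪ L₂ is pseudoconcave in V. -/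
open Metric Set

/-- A set `U ⊆ ℂⁿ` satisfies the Kontinuitätssatz:  for every family of closed holomorphic
discs in `U` (a continuous map `F` on `[0,1) × D̄`, holomorphic on `D` in the second variable,
with image in `U`) such that the union of the boundary circles is contained in a compact
subset of `U`, the union of the full closed discs is contained in a compact subset of `U`. -/
def SatisfiesKont {n : ℕ} (U : Set (Fin n → ℂ)) : Prop :=
  ∀ F : ℝ × ℂ → (Fin n → ℂ),
    ContinuousOn F (Ico (0 : ℝ) 1 ×ˢ closedBall (0 : ℂ) 1) →
    (∀ t ∈ Ico (0 : ℝ) 1, DifferentiableOn ℂ (fun z => F (t, z)) (ball (0 : ℂ) 1)) →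
    (∀ t ∈ Ico (0 : ℝ) 1, ∀ z ∈ closedBall (0 : ℂ) 1, F (t, z) ∈ U) →
    (∃ K : Set (Fin n → ℂ), K ⊆ U ∧ IsCompact K ∧
      ∀ t ∈ Ico (0 : ℝ) 1, ∀ z ∈ sphere (0 : ℂ) 1, F (t, z) ∈ K) →
    ∃ K : Set (Fin n → ℂ), K ⊆ U ∧ IsCompact K ∧
      ∀ t ∈ Ico (0 : ℝ) 1, ∀ z ∈ closedBall (0 : ℂ) 1, F (t, z) ∈ K

/-- A closed subset `L` of an open set `V ⊆ ℂⁿ` is pseudoconcave in `V` if every point of `L`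
has an open neighbourhood `W ⊆ V` such that `W ∖ L` satisfies the Kontinuitätssatz. -/
def PseudoconcaveIn {n : ℕ} (L V : Set (Fin n → ℂ)) : Prop :=
  ∀ x ∈ L, ∃ W : Set (Fin n → ℂ), IsOpen W ∧ W ⊆ V ∧ x ∈ W ∧ SatisfiesKont (W \ L)

lemma kont_inter {n : ℕ} {U₁ U₂ : Set (Fin n → ℂ)}
    (h₁ : SatisfiesKont U₁) (h₂ : SatisfiesKont U₂) : SatisfiesKont (U₁ ∩ U₂) := by
  intro F hc hd hm hK
  obtain ⟨K, hKU, hKc, hKb⟩ := hK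
  obtain ⟨K₁, hK₁U, hK₁c, hK₁⟩ := h₁ F hc hd (fun t ht z hz => (hm t ht z hz).1)
    ⟨K, fun y hy => (hKU hy).1, hKc, hKb⟩
  obtain ⟨K₂, hK₂U, hK₂c, hK₂⟩ := h₂ F hc hd (fun t ht z hz => (hm t ht z hz).2)
    ⟨K, fun y hy => (hKU hy).2, hKc, hKb⟩
  exact ⟨K₁ ∩ K₂, inter_subset_inter hK₁U hK₂U, hK₁c.inter_right hK₂c.isClosed,
    fun t ht z hz => ⟨hK₁ t ht z hz, hK₂ t ht z hz⟩⟩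

lemma kont_ball {n : ℕ} (c : Fin n → ℂ) (r : ℝ) : SatisfiesKont (ball c r) := by
  intro F hc hd hm hK
  obtain ⟨K, hKU, hKc, hKb⟩ := hK
  have h0 : (0 : ℝ) ∈ Ico (0 : ℝ) 1 := ⟨le_refl 0, one_pos⟩
  have hKne : K.Nonempty := ⟨F (0, 1), hKb 0 h0 1 (by simp)⟩
  obtain ⟨y₀, hy₀K, hy₀⟩ := hKc.exists_isMaxOn hKne
    ((continuous_id.dist continuous_const).continuousOn)
  set M := dist y₀ c with hM
  have hMr : M < r := hKU hy₀K
  have hM0 : 0 ≤ M := dist_nonneg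
  refine ⟨closedBall c M, fun y hy => lt_of_le_of_lt (mem_closedBall.1 hy) hMr,
    isCompact_closedBall c M, fun t ht z hz => ?_⟩
  have hcont : ContinuousOn (fun z => F (t, z)) (closedBall (0 : ℂ) 1) := by
    refine hc.comp (Continuous.continuousOn (by continuity)) ?_
    intro w hw; exact ⟨ht, hw⟩
  have hdcc : DiffContOnCl ℂ (fun z => F (t, z) - c) (ball (0 : ℂ) 1) := by
    constructor
    · exact (hd t ht).sub (differentiableOn_const c)
    · rw [closure_ball (0 : ℂ) one_ne_zero]
      exact hcont.sub continuousOn_const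
  have key : ‖F (t, z) - c‖ ≤ M := by
    refine Complex.norm_le_of_forall_mem_frontier_norm_le isBounded_ball hdcc ?_ ?_
    · intro w hw
      rw [frontier_ball (0 : ℂ) one_ne_zero] at hw
      have := hKb t ht w hw
      have := hy₀ (hKb t ht w hw)
      rw [hM, ← dist_eq_norm]; exact this
    · rw [closure_ball (0 : ℂ) one_ne_zero]; exact hz
  rw [mem_closedBall, dist_eq_norm]
  exact key


/-- If `V ⊆ ℂⁿ` is open and `L₁, L₂` are closed subsets of `V` (closed in
the subspace topology of `V`), each pseudoconcave in `V`, then `L₁ ∪ L₂` is pseudoconcave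
in `V`. -/
theorem stmt11 {n : ℕ} (V L₁ L₂ : Set (Fin n → ℂ)) (hV : IsOpen V)
    (hL₁V : L₁ ⊆ V) (hL₁closed : ∀ x ∈ V, x ∈ closure L₁ → x ∈ L₁)
    (hL₂V : L₂ ⊆ V) (hL₂closed : ∀ x ∈ V, x ∈ closure L₂ → x ∈ L₂)
    (h₁ : PseudoconcaveIn L₁ V) (h₂ : PseudoconcaveIn L₂ V) :
    PseudoconcaveIn (L₁ ∪ L₂) V := by
  -- helper: one-sided case
  have main : ∀ (L L' : Set (Fin n → ℂ)), L' ⊆ V → (∀ x ∈ V, x ∈ closure L' → x ∈ L') →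
      PseudoconcaveIn L V → PseudoconcaveIn L' V →
      ∀ x ∈ L, ∃ W : Set (Fin n → ℂ), IsOpen W ∧ W ⊆ V ∧ x ∈ W ∧
        SatisfiesKont (W \ (L ∪ L')) := by
    intro L L' hL'V hL'closed hL hL' x hx
    obtain ⟨W₁, hW₁o, hW₁V, hxW₁, hW₁k⟩ := hL x hx
    by_cases hx2 : x ∈ L'
    · obtain ⟨W₂, hW₂o, hW₂V, hxW₂, hW₂k⟩ := hL' x hx2
      refine ⟨W₁ ∩ W₂, hW₁o.inter hW₂o, fun y hy => hW₁V hy.1, ⟨hxW₁, hxW₂⟩, ?_⟩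
      have heq : (W₁ ∩ W₂) \ (L ∪ L') = (W₁ \ L) ∩ (W₂ \ L') := by
        ext y; simp only [mem_diff, mem_inter_iff, mem_union]; tauto
      rw [heq]; exact kont_inter hW₁k hW₂k
    · have hxcl : x ∉ closure L' := fun h => hx2 (hL'closed x (hW₁V hxW₁) h)
      obtain ⟨r, hr, hball⟩ := Metric.isOpen_iff.1 (isClosed_closure.isOpen_compl) x hxcl
      refine ⟨W₁ ∩ ball x r, hW₁o.inter isOpen_ball, fun y hy => hW₁V hy.1,
        ⟨hxW₁, mem_ball_self hr⟩, ?_⟩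
      have heq : (W₁ ∩ ball x r) \ (L ∪ L') = (W₁ \ L) ∩ ball x r := by
        ext y
        simp only [mem_diff, mem_inter_iff, mem_union]
        constructor
        · rintro ⟨⟨h1, h2⟩, h3⟩; exact ⟨⟨h1, fun h => h3 (Or.inl h)⟩, h2⟩
        · rintro ⟨⟨h1, h2⟩, h3⟩
          refine ⟨⟨h1, h3⟩, ?_⟩
          rintro (h | h)
          · exact h2 h
          · exact hball h3 (subset_closure h)
      rw [heq]; exact kont_inter hW₁k (kont_ball x r)
  intro x hx
  cases hx with
  | inl hx => exact main L₁ L₂ hL₂V hL₂closed h₁ h₂ x hx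
  | inr hx =>
    obtain ⟨W, hWo, hWV, hxW, hWk⟩ := main L₂ L₁ hL₁V hL₁closed h₂ h₁ x hx
    exact ⟨W, hWo, hWV, hxW, by rwa [union_comm]⟩
end

section
/- Let V ⊆ ℂⁿ be open and let A be a hypersurface of V, i.e. a closed subset such that every p ∈ A has an open neighbourhood U ⊆ V and a holomorphic function h : U → ℂ, not identically zero on any connected component of U, with A ∩ U = h⁻¹(0). Then A is pseudoconcave in V. -/
open Metric Set

/-- `A` is a hypersurface of the open set `V ⊆ ℂⁿ`:  `A` is a closed subset of `V` such that
every `p ∈ A` has an open neighbourhood `U ⊆ V` and a holomorphic function `h : U → ℂ`, not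
identically zero on any connected component of `U`, with `A ∩ U = h⁻¹(0)`. -/
def IsHypersurfaceIn {n : ℕ} (A V : Set (Fin n → ℂ)) : Prop :=
  A ⊆ V ∧ (∀ x ∈ V, x ∈ closure A → x ∈ A) ∧
  ∀ p ∈ A, ∃ U : Set (Fin n → ℂ), IsOpen U ∧ U ⊆ V ∧ p ∈ U ∧
    ∃ h : (Fin n → ℂ) → ℂ, DifferentiableOn ℂ h U ∧
      (∀ q ∈ U, ∃ z ∈ connectedComponentIn U q, h z ≠ 0) ∧
      A ∩ U = {z ∈ U | h z = 0}

/-- Every hypersurface `A` of an open set `V ⊆ ℂⁿ` is pseudoconcave in `V`. -/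
theorem stmt12 {n : ℕ} (V A : Set (Fin n → ℂ)) (hV : IsOpen V)
    (hA : IsHypersurfaceIn A V) : PseudoconcaveIn A V := by
  obtain ⟨hAV, hAcl, hloc⟩ := hA
  intro x hx
  obtain ⟨U, hUopen, hUV, hxU, h, hhd, -, hAU⟩ := hloc x hx
  -- choose ρ with closedBall x ρ ⊆ U
  obtain ⟨ρ, hρpos, hρ⟩ := nhds_basis_closedBall.mem_iff.mp (hUopen.mem_nhds hxU)
  refine ⟨ball x ρ, isOpen_ball, (ball_subset_closedBall.trans hρ).trans hUV,
    mem_ball_self hρpos, ?_⟩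
  intro F hFc hFd hFmem ⟨K, hKsub, hKcomp, hKbd⟩
  have hWU : ball x ρ ⊆ U := ball_subset_closedBall.trans hρ
  -- slice continuity
  have hF1 : ∀ t ∈ Ico (0:ℝ) 1, ContinuousOn (fun z => F (t, z)) (closedBall (0:ℂ) 1) := by
    intro t ht
    exact hFc.comp (Continuous.continuousOn (by continuity)) fun z hz => ⟨ht, hz⟩
  have hhc : ContinuousOn h U := hhd.continuousOn
  -- h doesn't vanish on W \ A ∩ U
  have hne : ∀ y ∈ ball x ρ \ A, h y ≠ 0 := by
    intro y hy hy0
    exact hy.2 (((Set.ext_iff.mp hAU y).mpr ⟨hWU hy.1, hy0⟩).1)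
  -- K nonempty
  have hKne : K.Nonempty := ⟨F (0, 1), hKbd 0 ⟨le_refl 0, one_pos⟩ 1 (by simp)⟩
  have hKU : K ⊆ U := fun y hy => hWU (hKsub hy).1
  -- r : max distance from x on K
  obtain ⟨z0, hz0K, hz0max⟩ := hKcomp.exists_isMaxOn (f := fun y => dist y x) hKne
    (continuous_id.dist continuous_const).continuousOn
  set r : ℝ := dist z0 x with hr
  have hrρ : r < ρ := (hKsub hz0K).1
  -- δ : min of ‖h‖ on K
  obtain ⟨z1, hz1K, hz1min⟩ := hKcomp.exists_isMinOn hKne ((hhc.mono hKU).norm)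
  set δ : ℝ := ‖h z1‖ with hδ
  have hδpos : 0 < δ := norm_pos_iff.mpr (hne z1 (hKsub hz1K))
  -- the compact set
  set K' : Set (Fin n → ℂ) := closedBall x r ∩ (fun y => ‖h y‖) ⁻¹' Ici δ with hK'
  have hK'cl : IsClosed K' := by
    have hc : ContinuousOn (fun y => ‖h y‖) (closedBall x r) :=
      (hhc.mono ((closedBall_subset_closedBall hrρ.le).trans hρ)).norm
    exact hc.preimage_isClosed_of_isClosed isClosed_closedBall isClosed_Ici
  have hK'sub : K' ⊆ ball x ρ \ A := by
    rintro y ⟨hy1, hy2⟩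
    have hyW : y ∈ ball x ρ := lt_of_le_of_lt (mem_closedBall.mp hy1) hrρ
    refine ⟨hyW, fun hyA => ?_⟩
    have h0 : h y = 0 := ((Set.ext_iff.mp hAU y).mp ⟨hyA, hWU hyW⟩).2
    have h2 : δ ≤ ‖h y‖ := hy2
    rw [h0, norm_zero] at h2
    exact absurd h2 (not_le.mpr hδpos)
  refine ⟨K', hK'sub, (isCompact_closedBall x r).of_isClosed_subset hK'cl
    Set.inter_subset_left, ?_⟩
  intro t ht z hz
  have hzcl : z ∈ closure (ball (0:ℂ) 1) := by rwa [closure_ball (0:ℂ) one_ne_zero]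
  have hmemU : ∀ w ∈ closedBall (0:ℂ) 1, F (t, w) ∈ U := fun w hw =>
    hWU (hFmem t ht w hw).1
  have hneF : ∀ w ∈ closedBall (0:ℂ) 1, h (F (t, w)) ≠ 0 := fun w hw =>
    hne _ (hFmem t ht w hw)
  constructor
  · -- dist bound via maximum principle
    have hdc : DiffContOnCl ℂ (fun w => F (t, w) - x) (ball (0:ℂ) 1) :=
      ⟨(hFd t ht).sub_const x, by
        rw [closure_ball (0:ℂ) one_ne_zero]
        exact (hF1 t ht).sub continuousOn_const⟩
    have := Complex.norm_le_of_forall_mem_frontier_norm_le isBounded_ball hdc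
      (C := r) (fun w hw => by
        rw [frontier_ball (0:ℂ) one_ne_zero] at hw
        rw [← dist_eq_norm]
        exact hz0max (hKbd t ht w hw)) hzcl
    rw [← dist_eq_norm] at this
    exact mem_closedBall.mpr this
  · -- δ bound via maximum principle for 1/(h ∘ F)
    have hcomp : ContinuousOn (fun w => h (F (t, w))) (closedBall (0:ℂ) 1) :=
      hhc.comp (hF1 t ht) hmemU
    have hdcomp : DifferentiableOn ℂ (fun w => h (F (t, w))) (ball (0:ℂ) 1) :=
      hhd.comp (hFd t ht) fun w hw => hmemU w (ball_subset_closedBall hw)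
    have hdc : DiffContOnCl ℂ (fun w => (h (F (t, w)))⁻¹) (ball (0:ℂ) 1) :=
      ⟨hdcomp.inv fun w hw => hneF w (ball_subset_closedBall hw), by
        rw [closure_ball (0:ℂ) one_ne_zero]
        exact hcomp.inv₀ hneF⟩
    have hbound := Complex.norm_le_of_forall_mem_frontier_norm_le isBounded_ball hdc
      (C := δ⁻¹) (fun w hw => by
        rw [frontier_ball (0:ℂ) one_ne_zero] at hw
        rw [norm_inv]
        exact inv_anti₀ hδpos (hz1min (hKbd t ht w hw))) hzcl
    rw [norm_inv] at hbound
    have hpos : 0 < ‖h (F (t, z))‖ := norm_pos_iff.mpr (hneF z hz)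
    show δ ≤ ‖h (F (t, z))‖
    exact (inv_le_inv₀ hpos hδpos).mp hbound
end
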